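/- Let (A, B) be a matched pair of Lie algebroids over M with representations ∇. Then the direct sum A ⊕ B with anchor c(X⊕Y) = a(X) + b(Y) and bracket [X₁⊕Y₁, X₂⊕Y₂] = ([X₁,X₂] + ∇_{Y₁}X₂ − ∇_{Y₂}X₁) ⊕ ([Y₁,Y₂] + ∇_{X₁}Y₂ − ∇_{X₂}Y₁) is a Lie algebroid, i.e. the bracket is skew, satisfies the Leibniz rule [s, ft] = (c(s)f)t + f[s,t], and the Jacobi identity. -/

import Mathlib

/-! The bracket is symmetric under exchanging the roles of `A` and `B` (together with the two
representations), so each identity only has to be checked on the `A`-component. There skewness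
and the Leibniz rule follow from those of `A` and of the representation `∇ : B → A → A`, while
the Jacobi identity, after expanding, reduces to the Jacobi identity of `A`, the flatness of `∇`
(which absorbs the terms `∇_{Y}∇_{Y'}X`), and the matched pair condition for `∇_Y ⁅X₁, X₂⁆`
(which absorbs the mixed terms). -/

/-- Algebraic model of a Lie algebroid over a "manifold" given by its commutative
`ℝ`-algebra of functions `R` (a Lie–Rinehart algebra). -/
structure LieAlgebroid (R : Type*) [CommRing R] [Algebra ℝ R]
    (L : Type*) [LieRing L] [LieAlgebra ℝ L] [Module R L] where
  anchor : L →ₗ[R] Derivation ℝ R R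
  anchor_lie : ∀ x y : L, anchor ⁅x, y⁆ = ⁅anchor x, anchor y⁆
  leibniz : ∀ (f : R) (x y : L), ⁅x, f • y⁆ = anchor x f • y + f • ⁅x, y⁆

section MatchedPair

variable {A B : Type*} [LieRing A] [LieRing B]

def matchedBracket (nAB : A → B → B) (nBA : B → A → A) (s t : A × B) : A × B :=
  (⁅s.1, t.1⁆ + nBA s.2 t.1 - nBA t.2 s.1, ⁅s.2, t.2⁆ + nAB s.1 t.2 - nAB t.1 s.2)

theorem matchedBracket_skew (nAB : A → B → B) (nBA : B → A → A) (s t : A × B) :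
    matchedBracket nAB nBA s t = -matchedBracket nAB nBA t s := by
  ext
  · simp only [matchedBracket, Prod.fst_neg, ← lie_skew s.1 t.1]; abel
  · simp only [matchedBracket, Prod.snd_neg, ← lie_skew s.2 t.2]; abel

theorem matchedBracket_jacobi_fst (nAB : A → B → B) (nBA : B → A → A)
    (add_left : ∀ (Y Y' : B) (X : A), nBA (Y + Y') X = nBA Y X + nBA Y' X)
    (add_right : ∀ (Y : B) (X X' : A), nBA Y (X + X') = nBA Y X + nBA Y X')
    (flat : ∀ (Y Y' : B) (X : A), nBA Y (nBA Y' X) - nBA Y' (nBA Y X) = nBA ⁅Y, Y'⁆ X)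
    (compat : ∀ (Y : B) (X₁ X₂ : A), nBA Y ⁅X₁, X₂⁆ = ⁅nBA Y X₁, X₂⁆ + ⁅X₁, nBA Y X₂⁆ +
      nBA (nAB X₂ Y) X₁ - nBA (nAB X₁ Y) X₂)
    (s t u : A × B) :
    (matchedBracket nAB nBA s (matchedBracket nAB nBA t u)).1 =
      (matchedBracket nAB nBA (matchedBracket nAB nBA s t) u).1 +
        (matchedBracket nAB nBA t (matchedBracket nAB nBA s u)).1 := by
  have sub_left : ∀ (Y Y' : B) (X : A), nBA (Y - Y') X = nBA Y X - nBA Y' X := fun Y Y' X =>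
    (AddMonoidHom.mk' (nBA · X) fun Y Y' => add_left Y Y' X).map_sub Y Y'
  have sub_right : ∀ (Y : B) (X X' : A), nBA Y (X - X') = nBA Y X - nBA Y X' := fun Y =>
    (AddMonoidHom.mk' (nBA Y) (add_right Y)).map_sub
  simp only [matchedBracket, lie_add, add_lie, lie_sub, sub_lie, add_left, add_right,
    sub_left, sub_right, compat, ← flat, lie_lie]
  rw [← lie_skew t.1 (nBA u.2 s.1)]
  abel

theorem matchedBracket_jacobi (nAB : A → B → B) (nBA : B → A → A)
    (hAB_add₁ : ∀ (X X' : A) (Y : B), nAB (X + X') Y = nAB X Y + nAB X' Y)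
    (hAB_add₂ : ∀ (X : A) (Y Y' : B), nAB X (Y + Y') = nAB X Y + nAB X Y')
    (hAB_flat : ∀ (X X' : A) (Y : B), nAB X (nAB X' Y) - nAB X' (nAB X Y) = nAB ⁅X, X'⁆ Y)
    (hBA_add₁ : ∀ (Y Y' : B) (X : A), nBA (Y + Y') X = nBA Y X + nBA Y' X)
    (hBA_add₂ : ∀ (Y : B) (X X' : A), nBA Y (X + X') = nBA Y X + nBA Y X')
    (hBA_flat : ∀ (Y Y' : B) (X : A), nBA Y (nBA Y' X) - nBA Y' (nBA Y X) = nBA ⁅Y, Y'⁆ X)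
    (hmp2 : ∀ (X : A) (Y₁ Y₂ : B), nAB X ⁅Y₁, Y₂⁆ = ⁅nAB X Y₁, Y₂⁆ + ⁅Y₁, nAB X Y₂⁆ +
      nAB (nBA Y₂ X) Y₁ - nAB (nBA Y₁ X) Y₂)
    (hmp3 : ∀ (Y : B) (X₁ X₂ : A), nBA Y ⁅X₁, X₂⁆ = ⁅nBA Y X₁, X₂⁆ + ⁅X₁, nBA Y X₂⁆ +
      nBA (nAB X₂ Y) X₁ - nBA (nAB X₁ Y) X₂)
    (s t u : A × B) :
    matchedBracket nAB nBA s (matchedBracket nAB nBA t u) =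
      matchedBracket nAB nBA (matchedBracket nAB nBA s t) u +
        matchedBracket nAB nBA t (matchedBracket nAB nBA s u) := by
  ext
  · exact matchedBracket_jacobi_fst nAB nBA hBA_add₁ hBA_add₂ hBA_flat hmp3 s t u
  · exact matchedBracket_jacobi_fst nBA nAB hAB_add₁ hAB_add₂ hAB_flat hmp2 s.swap t.swap u.swap

end MatchedPair

section Leibniz

variable {R : Type*} [CommRing R] [Algebra ℝ R]
  {A : Type*} [LieRing A] [LieAlgebra ℝ A] [Module R A]
  {B : Type*} [LieRing B] [LieAlgebra ℝ B] [Module R B]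

theorem matchedBracket_fst_smul_right (LA : LieAlgebroid R A) (LB : LieAlgebroid R B)
    (nAB : A → B → B) (nBA : B → A → A)
    (smul_left : ∀ (f : R) (Y : B) (X : A), nBA (f • Y) X = f • nBA Y X)
    (smul_right : ∀ (f : R) (Y : B) (X : A), nBA Y (f • X) = LB.anchor Y f • X + f • nBA Y X)
    (f : R) (s t : A × B) :
    (matchedBracket nAB nBA s (f • t)).1 =
      (LA.anchor s.1 f + LB.anchor s.2 f) • t.1 + f • (matchedBracket nAB nBA s t).1 := by
  simp only [matchedBracket, Prod.smul_fst, Prod.smul_snd, LA.leibniz, smul_left, smul_right,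
    add_smul, smul_add, smul_sub]
  abel

theorem matchedBracket_smul_right (LA : LieAlgebroid R A) (LB : LieAlgebroid R B)
    (nAB : A → B → B) (nBA : B → A → A)
    (hAB_smul₁ : ∀ (f : R) (X : A) (Y : B), nAB (f • X) Y = f • nAB X Y)
    (hAB_smul₂ : ∀ (f : R) (X : A) (Y : B), nAB X (f • Y) = LA.anchor X f • Y + f • nAB X Y)
    (hBA_smul₁ : ∀ (f : R) (Y : B) (X : A), nBA (f • Y) X = f • nBA Y X)
    (hBA_smul₂ : ∀ (f : R) (Y : B) (X : A), nBA Y (f • X) = LB.anchor Y f • X + f • nBA Y X)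
    (f : R) (s t : A × B) :
    matchedBracket nAB nBA s (f • t) =
      (LA.anchor s.1 + LB.anchor s.2) f • t + f • matchedBracket nAB nBA s t := by
  rw [Derivation.add_apply]
  ext
  · exact matchedBracket_fst_smul_right LA LB nAB nBA hBA_smul₁ hBA_smul₂ f s t
  · have h := matchedBracket_fst_smul_right LB LA nBA nAB hAB_smul₁ hAB_smul₂ f s.swap t.swap
    rwa [add_comm (LB.anchor s.swap.1 f)] at h

end Leibniz

theorem stmt19_general (R : Type*) [CommRing R] [Algebra ℝ R]
    (A : Type*) [LieRing A] [LieAlgebra ℝ A] [Module R A]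
    (B : Type*) [LieRing B] [LieAlgebra ℝ B] [Module R B]
    (LA : LieAlgebroid R A) (LB : LieAlgebroid R B)
    (nAB : A → B → B) (nBA : B → A → A)
    (hAB_add₁ : ∀ (X X' : A) (Y : B), nAB (X + X') Y = nAB X Y + nAB X' Y)
    (hAB_add₂ : ∀ (X : A) (Y Y' : B), nAB X (Y + Y') = nAB X Y + nAB X Y')
    (hAB_smul₁ : ∀ (f : R) (X : A) (Y : B), nAB (f • X) Y = f • nAB X Y)
    (hAB_smul₂ : ∀ (f : R) (X : A) (Y : B),
      nAB X (f • Y) = LA.anchor X f • Y + f • nAB X Y)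
    (hAB_flat : ∀ (X X' : A) (Y : B),
      nAB X (nAB X' Y) - nAB X' (nAB X Y) = nAB ⁅X, X'⁆ Y)
    (hBA_add₁ : ∀ (Y Y' : B) (X : A), nBA (Y + Y') X = nBA Y X + nBA Y' X)
    (hBA_add₂ : ∀ (Y : B) (X X' : A), nBA Y (X + X') = nBA Y X + nBA Y X')
    (hBA_smul₁ : ∀ (f : R) (Y : B) (X : A), nBA (f • Y) X = f • nBA Y X)
    (hBA_smul₂ : ∀ (f : R) (Y : B) (X : A),
      nBA Y (f • X) = LB.anchor Y f • X + f • nBA Y X)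
    (hBA_flat : ∀ (Y Y' : B) (X : A),
      nBA Y (nBA Y' X) - nBA Y' (nBA Y X) = nBA ⁅Y, Y'⁆ X)
    (hmp2 : ∀ (X : A) (Y₁ Y₂ : B),
      nAB X ⁅Y₁, Y₂⁆ = ⁅nAB X Y₁, Y₂⁆ + ⁅Y₁, nAB X Y₂⁆ +
        nAB (nBA Y₂ X) Y₁ - nAB (nBA Y₁ X) Y₂)
    (hmp3 : ∀ (Y : B) (X₁ X₂ : A),
      nBA Y ⁅X₁, X₂⁆ = ⁅nBA Y X₁, X₂⁆ + ⁅X₁, nBA Y X₂⁆ +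
        nBA (nAB X₂ Y) X₁ - nBA (nAB X₁ Y) X₂) :
    let br := fun (s t : A × B) =>
      ((⁅s.1, t.1⁆ + nBA s.2 t.1 - nBA t.2 s.1,
        ⁅s.2, t.2⁆ + nAB s.1 t.2 - nAB t.1 s.2) : A × B)
    let c := fun (s : A × B) => (LA.anchor s.1 + LB.anchor s.2 : Derivation ℝ R R)
    (∀ s t : A × B, br s t = -br t s) ∧
    (∀ (f : R) (s t : A × B), br s (f • t) = c s f • t + f • br s t) ∧
    (∀ s t u : A × B, br s (br t u) = br (br s t) u + br t (br s u)) := by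
  exact ⟨matchedBracket_skew nAB nBA,
    matchedBracket_smul_right LA LB nAB nBA hAB_smul₁ hAB_smul₂ hBA_smul₁ hBA_smul₂,
    matchedBracket_jacobi nAB nBA hAB_add₁ hAB_add₂ hAB_flat hBA_add₁ hBA_add₂ hBA_flat hmp2 hmp3⟩

/-- Let `(A, B)` be a matched pair of Lie algebroids with mutual
representations `∇`.  Then `A ⊕ B` with anchor `c(X⊕Y) = a X + b Y` and bracket
`[X₁⊕Y₁, X₂⊕Y₂] = ([X₁,X₂] + ∇_{Y₁}X₂ − ∇_{Y₂}X₁) ⊕ ([Y₁,Y₂] + ∇_{X₁}Y₂ − ∇_{X₂}Y₁)`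
is a Lie algebroid: the bracket is skew, satisfies the Leibniz rule
`[s, f t] = (c(s) f) t + f [s,t]`, and the Jacobi identity. -/
theorem stmt19 (R : Type*) [CommRing R] [Algebra ℝ R]
    (A : Type*) [LieRing A] [LieAlgebra ℝ A] [Module R A]
    (B : Type*) [LieRing B] [LieAlgebra ℝ B] [Module R B]
    (LA : LieAlgebroid R A) (LB : LieAlgebroid R B)
    (nAB : A → B → B) (nBA : B → A → A)
    (hAB_add₁ : ∀ (X X' : A) (Y : B), nAB (X + X') Y = nAB X Y + nAB X' Y)
    (hAB_add₂ : ∀ (X : A) (Y Y' : B), nAB X (Y + Y') = nAB X Y + nAB X Y')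
    (hAB_smul₁ : ∀ (f : R) (X : A) (Y : B), nAB (f • X) Y = f • nAB X Y)
    (hAB_smul₂ : ∀ (f : R) (X : A) (Y : B),
      nAB X (f • Y) = LA.anchor X f • Y + f • nAB X Y)
    (hAB_flat : ∀ (X X' : A) (Y : B),
      nAB X (nAB X' Y) - nAB X' (nAB X Y) = nAB ⁅X, X'⁆ Y)
    (hBA_add₁ : ∀ (Y Y' : B) (X : A), nBA (Y + Y') X = nBA Y X + nBA Y' X)
    (hBA_add₂ : ∀ (Y : B) (X X' : A), nBA Y (X + X') = nBA Y X + nBA Y X')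
    (hBA_smul₁ : ∀ (f : R) (Y : B) (X : A), nBA (f • Y) X = f • nBA Y X)
    (hBA_smul₂ : ∀ (f : R) (Y : B) (X : A),
      nBA Y (f • X) = LB.anchor Y f • X + f • nBA Y X)
    (hBA_flat : ∀ (Y Y' : B) (X : A),
      nBA Y (nBA Y' X) - nBA Y' (nBA Y X) = nBA ⁅Y, Y'⁆ X)
    (hmp1 : ∀ (X : A) (Y : B),
      ⁅LA.anchor X, LB.anchor Y⁆ = -LA.anchor (nBA Y X) + LB.anchor (nAB X Y))
    (hmp2 : ∀ (X : A) (Y₁ Y₂ : B),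
      nAB X ⁅Y₁, Y₂⁆ = ⁅nAB X Y₁, Y₂⁆ + ⁅Y₁, nAB X Y₂⁆ +
        nAB (nBA Y₂ X) Y₁ - nAB (nBA Y₁ X) Y₂)
    (hmp3 : ∀ (Y : B) (X₁ X₂ : A),
      nBA Y ⁅X₁, X₂⁆ = ⁅nBA Y X₁, X₂⁆ + ⁅X₁, nBA Y X₂⁆ +
        nBA (nAB X₂ Y) X₁ - nBA (nAB X₁ Y) X₂) :
    let br := fun (s t : A × B) =>
      ((⁅s.1, t.1⁆ + nBA s.2 t.1 - nBA t.2 s.1,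
        ⁅s.2, t.2⁆ + nAB s.1 t.2 - nAB t.1 s.2) : A × B)
    let c := fun (s : A × B) => (LA.anchor s.1 + LB.anchor s.2 : Derivation ℝ R R)
    (∀ s t : A × B, br s t = -br t s) ∧
    (∀ (f : R) (s t : A × B), br s (f • t) = c s f • t + f • br s t) ∧
    (∀ s t u : A × B, br s (br t u) = br (br s t) u + br t (br s u)) :=
  stmt19_general R A B LA LB nAB nBA hAB_add₁ hAB_add₂ hAB_smul₁ hAB_smul₂ hAB_flat hBA_add₁
    hBA_add₂ hBA_smul₁ hBA_smul₂ hBA_flat hmp2 hmp3
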